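/- arXiv:1908.07179 — 9 statements merged into one kernel-verified Lean document; each statement's English description precedes it below -/
import Mathlib

section
/- If u and v are squarefree monomials of the same degree d in a polynomial ring, then both components of the sorting sort(u,v) = (u', v') are again squarefree monomials of degree d. -/
/-!
Since `u` and `v` are squarefree, every index occurs at most twice in the sorted list of `uv`.
Two positions of the same parity are at least two apart, so equal entries there would force
three equal consecutive entries `i_k = i_{k+1} = i_{k+2}`. Hence both the odd- and the
even-position subsequences are strictly increasing, and each has length `d` because `uv` has
degree `2d`.
-/

/-- A monomial in the variables `x_1, x_2, …` is encoded as the multiset of indices of the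
variables occurring in it (with multiplicity); its degree is the cardinality of the multiset,
and it is squarefree iff the multiset has no duplicates. `msortFst u v` is the first component
`u'` of the sorting `sort(u,v)`: write `uv = x_{i_1} ⋯ x_{i_{2d}}` with
`i_1 ≤ ⋯ ≤ i_{2d}` and take the variables at odd positions. -/
def msortFst (u v : Multiset ℕ) : Multiset ℕ :=
  ↑((((u + v).sort (· ≤ ·)).zipIdx.filter (fun p => p.2 % 2 = 0)).map Prod.fst)

/-- The second component `v'` of the sorting: the variables at even positions. -/
def msortSnd (u v : Multiset ℕ) : Multiset ℕ :=
  ↑((((u + v).sort (· ≤ ·)).zipIdx.filter (fun p => p.2 % 2 = 1)).map Prod.fst)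

namespace List

variable {α : Type*}

def everyOther : List α → List α
  | [] => []
  | [a] => [a]
  | a :: _ :: l => a :: everyOther l

theorem map_fst_filter_zipIdx_mod_two (l : List α) (n r : ℕ) (h : n % 2 = r) :
    ((l.zipIdx n).filter (fun p => p.2 % 2 = r)).map Prod.fst = l.everyOther := by
  induction l using everyOther.induct generalizing n with
  | case1 => rfl
  | case2 a => simp [everyOther, h]
  | case3 a b l ih =>
    have hsucc : ¬ (n + 1) % 2 = r := by omega
    simp [everyOther, h, hsucc, ih (n + 2) (by omega)]

theorem length_everyOther (l : List α) : l.everyOther.length = (l.length + 1) / 2 := by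
  induction l using everyOther.induct with
  | case1 => simp [everyOther]
  | case2 a => simp [everyOther]
  | case3 a b l ih => simp only [everyOther, length_cons, ih]; omega

theorem everyOther_sublist (l : List α) : l.everyOther <+ l := by
  induction l using everyOther.induct with
  | case1 => exact .slnil
  | case2 a => exact .refl _
  | case3 a b l ih => exact (ih.cons b).cons_cons a

theorem pairwise_lt_everyOther [LinearOrder α] {l : List α} (hl : l.Pairwise (· ≤ ·))
    (hcount : ∀ a, l.count a ≤ 2) : l.everyOther.Pairwise (· < ·) := by
  induction l using everyOther.induct with
  | case1 => exact .nil
  | case2 a => exact pairwise_singleton _ a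
  | case3 a b l ih =>
    obtain ⟨hal, hbl, hl⟩ := pairwise_cons.1 hl |>.imp_right pairwise_cons.1
    have hab := hal b mem_cons_self
    refine pairwise_cons.2 ⟨fun x hx => ?_, ih hl fun c => ?_⟩
    · have hxl := (everyOther_sublist l).subset hx
      refine (hal x (mem_cons_of_mem b hxl)).lt_of_ne fun hax => ?_
      -- `a ≤ b ≤ x = a` forces three copies of `a` in `a :: b :: l`
      have hba : b = a := le_antisymm (hax ▸ hbl x hxl) hab
      have := hcount a
      simp only [count_cons, hba, beq_self_eq_true, if_true] at this
      have := count_pos_iff.2 (hax ▸ hxl)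
      omega
    · have := hcount c
      simp only [count_cons] at this
      omega

end List

open List

theorem msortFst_eq_everyOther (u v : Multiset ℕ) :
    msortFst u v = ((u + v).sort (· ≤ ·)).everyOther :=
  congrArg _ (map_fst_filter_zipIdx_mod_two _ 0 0 rfl)

theorem msortSnd_eq_everyOther_tail (u v : Multiset ℕ) :
    msortSnd u v = ((u + v).sort (· ≤ ·)).tail.everyOther := by
  rw [msortSnd]
  cases (u + v).sort (· ≤ ·) with
  | nil => rfl
  | cons a l => simp [map_fst_filter_zipIdx_mod_two l 1 1 rfl]

theorem stmt_1 (d : ℕ) (u v : Multiset ℕ)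
    (hu : u.card = d) (hv : v.card = d)
    (hus : u.Nodup) (hvs : v.Nodup) :
    (msortFst u v).Nodup ∧ (msortFst u v).card = d ∧
    (msortSnd u v).Nodup ∧ (msortSnd u v).card = d := by
  rw [msortFst_eq_everyOther, msortSnd_eq_everyOther_tail]
  set l := (u + v).sort (· ≤ ·) with hl
  have hsorted : l.Pairwise (· ≤ ·) := Multiset.pairwise_sort _ _
  have hlen : l.length = 2 * d := by
    rw [hl, Multiset.length_sort, Multiset.card_add, hu, hv, two_mul]
  have hcount (a : ℕ) : l.count a ≤ 2 := by
    rw [← Multiset.coe_count, hl, Multiset.sort_eq, Multiset.count_add]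
    have := Multiset.nodup_iff_count_le_one.1 hus a
    have := Multiset.nodup_iff_count_le_one.1 hvs a
    omega
  have htail : l.tail <+ l := tail_sublist l
  refine ⟨?_, ?_, ?_, ?_⟩
  · exact Multiset.coe_nodup.2 (pairwise_lt_everyOther hsorted hcount).nodup
  · rw [Multiset.coe_card, length_everyOther, hlen]; omega
  · exact Multiset.coe_nodup.2 (pairwise_lt_everyOther (hsorted.sublist htail)
      fun a => (htail.count_le a).trans (hcount a)).nodup
  · rw [Multiset.coe_card, length_everyOther, length_tail, hlen]; omega
end

section
/- Suppose Δ₁ and Δ₂ are simplicial complexes on disjoint vertex sets in ℕ, each sortable with respect to labelings such that every vertex of Δ₁ is smaller than every vertex of Δ₂. For F₁, G₁ ∈ Δ₁ and F₂, G₂ ∈ Δ₂ with sort(F₁,G₁) = (F₁',G₁') and sort(F₂,G₂) = (F₂',G₂'): if |F₁| + |G₁| is even then sort(F₁∪F₂, G₁∪G₂) = (F₁'∪F₂', G₁'∪G₂'), and if |F₁| + |G₁| is odd then sort(F₁∪F₂, G₁∪G₂) = (F₁'∪G₂', G₁'∪F₂'). -/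
/-- The first component of the sorting `sort(F,G)`: the elements at odd
positions (1-indexed) of the weakly increasing list of the multiset union of `F` and `G`. -/
def sortFst (F G : Finset ℕ) : Finset ℕ :=
  ((((F.val + G.val).sort (· ≤ ·)).zipIdx.filter (fun p => p.2 % 2 = 0)).map Prod.fst).toFinset

/-- The second component of the sorting `sort(F,G)`: the elements at even
positions (1-indexed). -/
def sortSnd (F G : Finset ℕ) : Finset ℕ :=
  ((((F.val + G.val).sort (· ≤ ·)).zipIdx.filter (fun p => p.2 % 2 = 1)).map Prod.fst).toFinset

def SortableWrt (Δ : Set (Finset ℕ)) : Prop :=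
  ∀ F ∈ Δ, ∀ G ∈ Δ, sortFst F G ∈ Δ ∧ sortSnd F G ∈ Δ

def vertexSet (Δ : Set (Finset ℕ)) : Set ℕ := ⋃ F ∈ Δ, (↑F : Set ℕ)

/-!
Every vertex of `Δ₁` lies below every vertex of `Δ₂`, so the sorted list of `F₁ ∪ F₂` and
`G₁ ∪ G₂` is the sorted list `l₁` of `F₁, G₁` followed by the sorted list `l₂` of `F₂, G₂`.
Position `i` of `l₂` is position `|l₁| + i` of the concatenation, so the odd/even split of `l₂`
is kept or swapped according to the parity of `|l₁| = |F₁| + |G₁|`.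
-/

/-- Positions are 0-indexed, so `parityEntries 0` keeps the odd positions in 1-indexed terms. -/
def List.parityEntries {α : Type*} (r : ℕ) (l : List α) : List α :=
  (l.zipIdx.filter (fun p => p.2 % 2 = r % 2)).map Prod.fst

namespace List

variable {α : Type*}

theorem parityEntries_congr {r s : ℕ} (h : r % 2 = s % 2) (l : List α) :
    l.parityEntries r = l.parityEntries s := by
  simp only [parityEntries, h]

theorem parityEntries_append (r : ℕ) (l₁ l₂ : List α) :
    (l₁ ++ l₂).parityEntries r = l₁.parityEntries r ++ l₂.parityEntries (r + l₁.length) := by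
  rw [parityEntries, parityEntries, parityEntries, zipIdx_append,
    zipIdx_eq_map_add (i := 0 + _), filter_append, map_append, filter_map, map_map]
  congr 2
  refine filter_congr fun p _ => ?_
  simp only [Function.comp_apply, decide_eq_decide]
  omega

end List

theorem Multiset.sort_add_of_forall_le {α : Type*} [LinearOrder α] {s t : Multiset α}
    (h : ∀ a ∈ s, ∀ b ∈ t, a ≤ b) :
    (s + t).sort (· ≤ ·) = s.sort (· ≤ ·) ++ t.sort (· ≤ ·) := by
  refine List.Perm.eq_of_pairwise' (r := (· ≤ ·)) (pairwise_sort _ _) ?_ ?_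
  · rw [List.pairwise_append]
    exact ⟨pairwise_sort _ _, pairwise_sort _ _,
      fun a ha b hb => h a ((mem_sort _).1 ha) b ((mem_sort _).1 hb)⟩
  · rw [← coe_eq_coe, ← coe_add, sort_eq, sort_eq, sort_eq]

def sortPart (r : ℕ) (F G : Finset ℕ) : Finset ℕ :=
  (((F.val + G.val).sort (· ≤ ·)).parityEntries r).toFinset

theorem sortFst_eq_sortPart (F G : Finset ℕ) : sortFst F G = sortPart 0 F G := rfl

theorem sortSnd_eq_sortPart (F G : Finset ℕ) : sortSnd F G = sortPart 1 F G := rfl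

theorem sortPart_congr {r s : ℕ} (h : r % 2 = s % 2) (F G : Finset ℕ) :
    sortPart r F G = sortPart s F G := by
  rw [sortPart, sortPart, List.parityEntries_congr h]

theorem sortPart_union_of_lt (r : ℕ) {F₁ G₁ F₂ G₂ : Finset ℕ}
    (h : ∀ a ∈ F₁ ∪ G₁, ∀ b ∈ F₂ ∪ G₂, a < b) :
    sortPart r (F₁ ∪ F₂) (G₁ ∪ G₂) =
      sortPart r F₁ G₁ ∪ sortPart (r + (F₁.card + G₁.card)) F₂ G₂ := by
  have hdisj {s t : Finset ℕ} (hs : s ⊆ F₁ ∪ G₁) (ht : t ⊆ F₂ ∪ G₂) :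
      (s ∪ t).val = s.val + t.val := by
    have hst : Disjoint s t := Finset.disjoint_left.2 fun a has hat =>
      (h a (hs has) a (ht hat)).false
    rw [← Finset.disjUnion_eq_union _ _ hst, Finset.disjUnion_val]
  have hsplit : (F₁ ∪ F₂).val + (G₁ ∪ G₂).val = (F₁.val + G₁.val) + (F₂.val + G₂.val) := by
    rw [hdisj Finset.subset_union_left Finset.subset_union_left,
      hdisj Finset.subset_union_right Finset.subset_union_right, add_add_add_comm]
  have hle : ∀ a ∈ F₁.val + G₁.val, ∀ b ∈ F₂.val + G₂.val, a ≤ b := fun a ha b hb =>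
    (h a (by simpa using ha) b (by simpa using hb)).le
  rw [sortPart, hsplit, Multiset.sort_add_of_forall_le hle, List.parityEntries_append,
    List.toFinset_append, Multiset.length_sort, Multiset.card_add, Finset.card_val,
    Finset.card_val, sortPart, sortPart]

theorem coe_union_subset_vertexSet {Δ : Set (Finset ℕ)} {F G : Finset ℕ} (hF : F ∈ Δ)
    (hG : G ∈ Δ) : ((F ∪ G : Finset ℕ) : Set ℕ) ⊆ vertexSet Δ := by
  rw [Finset.coe_union]
  exact Set.union_subset (Set.subset_biUnion_of_mem hF) (Set.subset_biUnion_of_mem hG)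

theorem stmt_6_general (Δ₁ Δ₂ : Set (Finset ℕ))
    (hlt : ∀ a ∈ vertexSet Δ₁, ∀ b ∈ vertexSet Δ₂, a < b)
    (F₁ G₁ : Finset ℕ) (hF₁ : F₁ ∈ Δ₁) (hG₁ : G₁ ∈ Δ₁)
    (F₂ G₂ : Finset ℕ) (hF₂ : F₂ ∈ Δ₂) (hG₂ : G₂ ∈ Δ₂) :
    (Even (F₁.card + G₁.card) →
      sortFst (F₁ ∪ F₂) (G₁ ∪ G₂) = sortFst F₁ G₁ ∪ sortFst F₂ G₂ ∧
      sortSnd (F₁ ∪ F₂) (G₁ ∪ G₂) = sortSnd F₁ G₁ ∪ sortSnd F₂ G₂) ∧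
    (Odd (F₁.card + G₁.card) →
      sortFst (F₁ ∪ F₂) (G₁ ∪ G₂) = sortFst F₁ G₁ ∪ sortSnd F₂ G₂ ∧
      sortSnd (F₁ ∪ F₂) (G₁ ∪ G₂) = sortSnd F₁ G₁ ∪ sortFst F₂ G₂) := by
  have hsep : ∀ a ∈ F₁ ∪ G₁, ∀ b ∈ F₂ ∪ G₂, a < b := fun a ha b hb =>
    hlt a (coe_union_subset_vertexSet hF₁ hG₁ ha) b (coe_union_subset_vertexSet hF₂ hG₂ hb)
  simp only [sortFst_eq_sortPart, sortSnd_eq_sortPart, sortPart_union_of_lt _ hsep,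
    Nat.even_iff, Nat.odd_iff]
  refine ⟨fun h => ⟨?_, ?_⟩, fun h => ⟨?_, ?_⟩⟩ <;>
    exact congrArg _ (sortPart_congr (by omega) _ _)

theorem stmt_6 (Δ₁ Δ₂ : Set (Finset ℕ))
    (h₁ : SortableWrt Δ₁) (h₂ : SortableWrt Δ₂)
    (hlt : ∀ a ∈ vertexSet Δ₁, ∀ b ∈ vertexSet Δ₂, a < b)
    (F₁ G₁ : Finset ℕ) (hF₁ : F₁ ∈ Δ₁) (hG₁ : G₁ ∈ Δ₁)
    (F₂ G₂ : Finset ℕ) (hF₂ : F₂ ∈ Δ₂) (hG₂ : G₂ ∈ Δ₂) :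
    (Even (F₁.card + G₁.card) →
      sortFst (F₁ ∪ F₂) (G₁ ∪ G₂) = sortFst F₁ G₁ ∪ sortFst F₂ G₂ ∧
      sortSnd (F₁ ∪ F₂) (G₁ ∪ G₂) = sortSnd F₁ G₁ ∪ sortSnd F₂ G₂) ∧
    (Odd (F₁.card + G₁.card) →
      sortFst (F₁ ∪ F₂) (G₁ ∪ G₂) = sortFst F₁ G₁ ∪ sortSnd F₂ G₂ ∧
      sortSnd (F₁ ∪ F₂) (G₁ ∪ G₂) = sortSnd F₁ G₁ ∪ sortFst F₂ G₂) :=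
  stmt_6_general Δ₁ Δ₂ hlt F₁ G₁ hF₁ hG₁ F₂ G₂ hF₂ hG₂
end

section
/- For a finite simple graph G on vertex set {1,...,n}, the following are equivalent: (i) for all i < j, if {i,j} is an edge of G, then the induced subgraph of G on {i, i+1, ..., j} is a clique; (iv) for all 1 ≤ i ≤ n, the closed neighborhood N_G[i] is an interval {r, r+1, ..., s}. -/
theorem stmt_9 (n : ℕ) (G : SimpleGraph (Fin n)) [DecidableRel G.Adj] :
    (∀ i j : Fin n, i < j → G.Adj i j →
        ∀ k l : Fin n, i ≤ k → k ≤ j → i ≤ l → l ≤ j → k ≠ l → G.Adj k l) ↔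
    (∀ i : Fin n, ∃ r s : Fin n, r ≤ s ∧
        insert i (G.neighborFinset i) = Finset.Icc r s) := by
  constructor
  · intro h i
    set A := insert i (G.neighborFinset i) with hA
    have hi : i ∈ A := Finset.mem_insert_self _ _
    have hne : A.Nonempty := ⟨i, hi⟩
    refine ⟨A.min' hne, A.max' hne, le_trans (A.min'_le i hi) (A.le_max' i hi), ?_⟩
    apply Finset.ext
    intro k
    simp only [Finset.mem_Icc]
    constructor
    · intro hk
      exact ⟨A.min'_le k hk, A.le_max' k hk⟩
    · rintro ⟨h1, h2⟩
      rcases lt_trichotomy k i with hki | rfl | hik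
      · have hr : A.min' hne ∈ A := A.min'_mem hne
        have hrlt : A.min' hne < i := lt_of_le_of_lt h1 hki
        have hadj : G.Adj i (A.min' hne) := by
          rcases Finset.mem_insert.mp hr with h' | h'
          · exact absurd h' (ne_of_lt hrlt)
          · exact (SimpleGraph.mem_neighborFinset _ _ _).mp h'
        have : G.Adj k i :=
          h (A.min' hne) i hrlt hadj.symm k i h1 (le_of_lt hki) (le_of_lt hrlt) le_rfl
            (ne_of_lt hki)
        exact Finset.mem_insert_of_mem ((SimpleGraph.mem_neighborFinset _ _ _).mpr this.symm)
      · exact hi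
      · have hs : A.max' hne ∈ A := A.max'_mem hne
        have hslt : i < A.max' hne := lt_of_lt_of_le hik h2
        have hadj : G.Adj i (A.max' hne) := by
          rcases Finset.mem_insert.mp hs with h' | h'
          · exact absurd h' (ne_of_gt hslt)
          · exact (SimpleGraph.mem_neighborFinset _ _ _).mp h'
        have : G.Adj i k :=
          h i (A.max' hne) hslt hadj i k le_rfl (le_of_lt hslt) (le_of_lt hik) h2
            (ne_of_lt hik)
        exact Finset.mem_insert_of_mem ((SimpleGraph.mem_neighborFinset _ _ _).mpr this)
  · intro h i j hij hadj
    have key : ∀ k l : Fin n, i ≤ k → k < l → l ≤ j → G.Adj k l := by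
      intro k l hik hkl hlj
      have hil : i < l := lt_of_le_of_lt hik hkl
      -- l ∈ N[i]
      obtain ⟨r, s, _, heq⟩ := h i
      have hiI : i ∈ Finset.Icc r s := heq ▸ Finset.mem_insert_self _ _
      have hjI : j ∈ Finset.Icc r s := heq ▸
        Finset.mem_insert_of_mem ((SimpleGraph.mem_neighborFinset _ _ _).mpr hadj)
      have hri : r ≤ i := (Finset.mem_Icc.mp hiI).1
      have hjs : j ≤ s := (Finset.mem_Icc.mp hjI).2
      have hlI : l ∈ insert i (G.neighborFinset i) := by
        rw [heq]
        exact Finset.mem_Icc.mpr ⟨le_trans hri (le_of_lt hil), le_trans hlj hjs⟩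
      have hadjil : G.Adj i l := by
        rcases Finset.mem_insert.mp hlI with h' | h'
        · exact absurd h'.symm (ne_of_lt hil)
        · exact (SimpleGraph.mem_neighborFinset _ _ _).mp h'
      -- k ∈ N[l]
      obtain ⟨r', s', _, heq'⟩ := h l
      have hiI' : i ∈ Finset.Icc r' s' := heq' ▸
        Finset.mem_insert_of_mem ((SimpleGraph.mem_neighborFinset _ _ _).mpr hadjil.symm)
      have hlI' : l ∈ Finset.Icc r' s' := heq' ▸ Finset.mem_insert_self _ _
      have hkI' : k ∈ insert l (G.neighborFinset l) := by
        rw [heq']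
        exact Finset.mem_Icc.mpr ⟨le_trans (Finset.mem_Icc.mp hiI').1 hik,
          le_trans (le_of_lt hkl) (Finset.mem_Icc.mp hlI').2⟩
      rcases Finset.mem_insert.mp hkI' with h' | h'
      · exact absurd h' (ne_of_lt hkl)
      · exact ((SimpleGraph.mem_neighborFinset _ _ _).mp h').symm
    intro k l hik hkj hil hlj hkl
    rcases hkl.lt_or_gt with h' | h'
    · exact key k l hik h' hlj
    · exact (key l k hil h' hkj).symm
end

section
/- For a finite simple graph G on vertex set {1,...,n}, the following are equivalent: (i) for all i < j with {i,j} ∈ E(G), the induced subgraph on {i,...,j} is a clique; (ii) for all 1 ≤ i ≤ n, N_{G^i}[i] is both a clique and an interval, where G^i is the induced subgraph of G on {i, i+1, ..., n}; (iii) for all 1 ≤ i ≤ n, N_{G_i}[i] is both a clique and an interval, where G_i is the induced subgraph of G on {1, ..., i}. -/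
/-- A finset of vertices is a clique of `G`. -/
def IsCliqueSet {n : ℕ} (G : SimpleGraph (Fin n)) (A : Finset (Fin n)) : Prop :=
  ∀ a ∈ A, ∀ b ∈ A, a ≠ b → G.Adj a b

/-- A finset of vertices is an interval. -/
def IsIntervalSet {n : ℕ} (A : Finset (Fin n)) : Prop :=
  ∃ r s : Fin n, r ≤ s ∧ A = Finset.Icc r s

section Aux

variable {n : ℕ} (G : SimpleGraph (Fin n)) [DecidableRel G.Adj]

lemma mem_up (i x : Fin n) :
    x ∈ insert i ((G.neighborFinset i).filter (fun j => i ≤ j)) ↔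
      x = i ∨ (G.Adj i x ∧ i ≤ x) := by
  simp [Finset.mem_insert, Finset.mem_filter, SimpleGraph.mem_neighborFinset]

lemma mem_down (i x : Fin n) :
    x ∈ insert i ((G.neighborFinset i).filter (fun j => j ≤ i)) ↔
      x = i ∨ (G.Adj i x ∧ x ≤ i) := by
  simp [Finset.mem_insert, Finset.mem_filter, SimpleGraph.mem_neighborFinset]

lemma up_of_H (H : ∀ i j : Fin n, i < j → G.Adj i j →
    ∀ k l : Fin n, i ≤ k → k ≤ j → i ≤ l → l ≤ j → k ≠ l → G.Adj k l)
    (i : Fin n) :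
    IsCliqueSet G (insert i ((G.neighborFinset i).filter (fun j => i ≤ j))) ∧
    IsIntervalSet (insert i ((G.neighborFinset i).filter (fun j => i ≤ j))) := by
  set A := insert i ((G.neighborFinset i).filter (fun j => i ≤ j)) with hAdef
  have hmem : ∀ x, x ∈ A ↔ x = i ∨ (G.Adj i x ∧ i ≤ x) := mem_up G i
  have hiA : i ∈ A := (hmem i).mpr (Or.inl rfl)
  constructor
  · intro a ha b hb hab
    rcases (hmem a).mp ha with ra | ⟨raadj, rale⟩
    · rcases (hmem b).mp hb with rb | ⟨rbadj, _⟩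
      · exact absurd (ra.trans rb.symm) hab
      · exact ra ▸ rbadj
    · rcases (hmem b).mp hb with rb | ⟨rbadj, rble⟩
      · exact rb ▸ raadj.symm
      · rcases lt_or_gt_of_ne hab with h1 | h1
        · have hib : i < b := lt_of_le_of_ne rble rbadj.ne
          exact H i b hib rbadj a b rale h1.le hib.le le_rfl hab
        · have hia : i < a := lt_of_le_of_ne rale raadj.ne
          exact H i a hia raadj a b rale le_rfl rble h1.le hab
  · have hne : A.Nonempty := ⟨i, hiA⟩
    refine ⟨i, A.max' hne, A.le_max' i hiA, ?_⟩
    ext x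
    simp only [Finset.mem_Icc]
    constructor
    · intro hx
      refine ⟨?_, A.le_max' x hx⟩
      rcases (hmem x).mp hx with rx | ⟨_, hle⟩
      · exact rx.ge
      · exact hle
    · rintro ⟨hix, hxs⟩
      have hsA : A.max' hne ∈ A := A.max'_mem hne
      rcases eq_or_lt_of_le hix with heq | hix'
      · exact heq ▸ hiA
      rcases eq_or_lt_of_le hxs with heq | hxs'
      · exact heq ▸ hsA
      rcases (hmem _).mp hsA with rs | ⟨rsadj, _⟩
      · exact absurd (rs ▸ (hix'.trans hxs')) (lt_irrefl i)
      · have his : i < A.max' hne := hix'.trans hxs'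
        have : G.Adj i x := H i _ his rsadj i x le_rfl his.le hix'.le hxs'.le (ne_of_lt hix')
        exact (hmem x).mpr (Or.inr ⟨this, hix'.le⟩)

lemma H_of_up (h : ∀ i : Fin n,
      IsCliqueSet G (insert i ((G.neighborFinset i).filter (fun j => i ≤ j))) ∧
      IsIntervalSet (insert i ((G.neighborFinset i).filter (fun j => i ≤ j)))) :
    ∀ i j : Fin n, i < j → G.Adj i j →
      ∀ k l : Fin n, i ≤ k → k ≤ j → i ≤ l → l ≤ j → k ≠ l → G.Adj k l := by
  intro i j hij hadj k l hik hkj hil hlj hkl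
  obtain ⟨hc, r, s, hrs, hA⟩ := h i
  have hmem : ∀ x, x ∈ insert i ((G.neighborFinset i).filter (fun j => i ≤ j)) ↔
      x = i ∨ (G.Adj i x ∧ i ≤ x) := mem_up G i
  have hiA : i ∈ insert i ((G.neighborFinset i).filter (fun j => i ≤ j)) :=
    (hmem i).mpr (Or.inl rfl)
  have hjA : j ∈ insert i ((G.neighborFinset i).filter (fun j => i ≤ j)) :=
    (hmem j).mpr (Or.inr ⟨hadj, hij.le⟩)
  rw [hA] at hiA hjA
  have hri : r ≤ i := (Finset.mem_Icc.mp hiA).1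
  have hjs : j ≤ s := (Finset.mem_Icc.mp hjA).2
  have hkA : k ∈ insert i ((G.neighborFinset i).filter (fun j => i ≤ j)) := by
    rw [hA]; exact Finset.mem_Icc.mpr ⟨hri.trans hik, hkj.trans hjs⟩
  have hlA : l ∈ insert i ((G.neighborFinset i).filter (fun j => i ≤ j)) := by
    rw [hA]; exact Finset.mem_Icc.mpr ⟨hri.trans hil, hlj.trans hjs⟩
  exact hc k hkA l hlA hkl

lemma down_of_H (H : ∀ i j : Fin n, i < j → G.Adj i j →
    ∀ k l : Fin n, i ≤ k → k ≤ j → i ≤ l → l ≤ j → k ≠ l → G.Adj k l)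
    (i : Fin n) :
    IsCliqueSet G (insert i ((G.neighborFinset i).filter (fun j => j ≤ i))) ∧
    IsIntervalSet (insert i ((G.neighborFinset i).filter (fun j => j ≤ i))) := by
  set A := insert i ((G.neighborFinset i).filter (fun j => j ≤ i)) with hAdef
  have hmem : ∀ x, x ∈ A ↔ x = i ∨ (G.Adj i x ∧ x ≤ i) := mem_down G i
  have hiA : i ∈ A := (hmem i).mpr (Or.inl rfl)
  constructor
  · intro a ha b hb hab
    rcases (hmem a).mp ha with ra | ⟨raadj, rale⟩
    · rcases (hmem b).mp hb with rb | ⟨rbadj, _⟩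
      · exact absurd (ra.trans rb.symm) hab
      · exact ra ▸ rbadj
    · rcases (hmem b).mp hb with rb | ⟨rbadj, rble⟩
      · exact rb ▸ raadj.symm
      · rcases lt_or_gt_of_ne hab with h1 | h1
        · have hai : a < i := lt_of_le_of_ne rale raadj.ne'
          exact H a i hai raadj.symm a b le_rfl rale (h1.le) rble hab
        · have hbi : b < i := lt_of_le_of_ne rble rbadj.ne'
          exact H b i hbi rbadj.symm a b h1.le rale le_rfl rble hab
  · have hne : A.Nonempty := ⟨i, hiA⟩
    refine ⟨A.min' hne, i, A.min'_le i hiA, ?_⟩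
    ext x
    simp only [Finset.mem_Icc]
    constructor
    · intro hx
      refine ⟨A.min'_le x hx, ?_⟩
      rcases (hmem x).mp hx with rx | ⟨_, hle⟩
      · exact rx.le
      · exact hle
    · rintro ⟨hrx, hxi⟩
      have hrA : A.min' hne ∈ A := A.min'_mem hne
      rcases eq_or_lt_of_le hrx with heq | hrx'
      · exact heq ▸ hrA
      rcases eq_or_lt_of_le hxi with heq | hxi'
      · exact heq ▸ hiA
      rcases (hmem _).mp hrA with rr | ⟨rradj, _⟩
      · rw [rr] at hrx'
        exact absurd (hrx'.trans hxi') (lt_irrefl i)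
      · have hri : A.min' hne < i := hrx'.trans hxi'
        have : G.Adj x i := H _ i hri rradj.symm x i hrx'.le hxi'.le hri.le le_rfl (ne_of_lt hxi')
        exact (hmem x).mpr (Or.inr ⟨this.symm, hxi'.le⟩)

lemma H_of_down (h : ∀ i : Fin n,
      IsCliqueSet G (insert i ((G.neighborFinset i).filter (fun j => j ≤ i))) ∧
      IsIntervalSet (insert i ((G.neighborFinset i).filter (fun j => j ≤ i)))) :
    ∀ i j : Fin n, i < j → G.Adj i j →
      ∀ k l : Fin n, i ≤ k → k ≤ j → i ≤ l → l ≤ j → k ≠ l → G.Adj k l := by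
  intro i j hij hadj k l hik hkj hil hlj hkl
  obtain ⟨hc, r, s, hrs, hA⟩ := h j
  have hmem : ∀ x, x ∈ insert j ((G.neighborFinset j).filter (fun m => m ≤ j)) ↔
      x = j ∨ (G.Adj j x ∧ x ≤ j) := mem_down G j
  have hjA : j ∈ insert j ((G.neighborFinset j).filter (fun m => m ≤ j)) :=
    (hmem j).mpr (Or.inl rfl)
  have hiA : i ∈ insert j ((G.neighborFinset j).filter (fun m => m ≤ j)) :=
    (hmem i).mpr (Or.inr ⟨hadj.symm, hij.le⟩)
  rw [hA] at hiA hjA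
  have hri : r ≤ i := (Finset.mem_Icc.mp hiA).1
  have hjs : j ≤ s := (Finset.mem_Icc.mp hjA).2
  have hkA : k ∈ insert j ((G.neighborFinset j).filter (fun m => m ≤ j)) := by
    rw [hA]; exact Finset.mem_Icc.mpr ⟨hri.trans hik, hkj.trans hjs⟩
  have hlA : l ∈ insert j ((G.neighborFinset j).filter (fun m => m ≤ j)) := by
    rw [hA]; exact Finset.mem_Icc.mpr ⟨hri.trans hil, hlj.trans hjs⟩
  exact hc k hkA l hlA hkl

end Aux

theorem stmt_10 (n : ℕ) (G : SimpleGraph (Fin n)) [DecidableRel G.Adj] :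
    ((∀ i j : Fin n, i < j → G.Adj i j →
        ∀ k l : Fin n, i ≤ k → k ≤ j → i ≤ l → l ≤ j → k ≠ l → G.Adj k l) ↔
      (∀ i : Fin n,
        IsCliqueSet G (insert i ((G.neighborFinset i).filter (fun j => i ≤ j))) ∧
        IsIntervalSet (insert i ((G.neighborFinset i).filter (fun j => i ≤ j))))) ∧
    ((∀ i : Fin n,
        IsCliqueSet G (insert i ((G.neighborFinset i).filter (fun j => i ≤ j))) ∧
        IsIntervalSet (insert i ((G.neighborFinset i).filter (fun j => i ≤ j)))) ↔
      (∀ i : Fin n,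
        IsCliqueSet G (insert i ((G.neighborFinset i).filter (fun j => j ≤ i))) ∧
        IsIntervalSet (insert i ((G.neighborFinset i).filter (fun j => j ≤ i))))) := by
  have h12 : (∀ i j : Fin n, i < j → G.Adj i j →
        ∀ k l : Fin n, i ≤ k → k ≤ j → i ≤ l → l ≤ j → k ≠ l → G.Adj k l) ↔
      (∀ i : Fin n,
        IsCliqueSet G (insert i ((G.neighborFinset i).filter (fun j => i ≤ j))) ∧
        IsIntervalSet (insert i ((G.neighborFinset i).filter (fun j => i ≤ j)))) :=
    ⟨up_of_H G, H_of_up G⟩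
  have h13 : (∀ i j : Fin n, i < j → G.Adj i j →
        ∀ k l : Fin n, i ≤ k → k ≤ j → i ≤ l → l ≤ j → k ≠ l → G.Adj k l) ↔
      (∀ i : Fin n,
        IsCliqueSet G (insert i ((G.neighborFinset i).filter (fun j => j ≤ i))) ∧
        IsIntervalSet (insert i ((G.neighborFinset i).filter (fun j => j ≤ i)))) :=
    ⟨down_of_H G, H_of_down G⟩
  exact ⟨h12, h12.symm.trans h13⟩
end

section
/- Let G be a graph on vertex set {1,...,n}. The independence complex Δ(G) is sortable with respect to some labeling of the vertices if and only if G admits a labeling such that for all i < j with {i,j} ∈ E(G), the induced subgraph of G on {i, i+1, ..., j} is a clique (i.e., G is a proper interval graph). -/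
def Sortable (Δ : Set (Finset ℕ)) : Prop :=
  ∃ f : ℕ → ℕ, Function.Injective f ∧ SortableWrt {F | ∃ H ∈ Δ, F = H.image f}

def IsIndep (G : SimpleGraph ℕ) (F : Finset ℕ) : Prop :=
  ∀ a ∈ F, ∀ b ∈ F, ¬ G.Adj a b

def indepComplex (G : SimpleGraph ℕ) (V : Finset ℕ) : Set (Finset ℕ) :=
  {F | F ⊆ V ∧ IsIndep G F}

/-- A labeling `f` of the vertices of `G` exhibits `G` as a proper interval graph:
for every edge `{a,b}` with `f a < f b`, any two vertices whose labels lie in the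
interval `[f a, f b]` are adjacent; i.e. the induced subgraph on the label
interval is a clique. -/
def ProperIntervalLabeling (G : SimpleGraph ℕ) (V : Finset ℕ) (f : ℕ → ℕ) : Prop :=
  ∀ a ∈ V, ∀ b ∈ V, G.Adj a b → f a < f b →
    ∀ c ∈ V, ∀ d ∈ V, f a ≤ f c → f c ≤ f b → f a ≤ f d → f d ≤ f b →
      c ≠ d → G.Adj c d

/-!
Relabelling along an injective `f` carries the independence complex and the labeling condition
over to the graph `G.map f` with the identity labeling, so the labels may be taken to be the
vertices themselves. If an edge `a b` and a vertex `a < c < b` had, say, `a c` as a non-edge,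
sorting the faces `{a, c}` and `{b}` would produce the non-face `{a, b}`; applying this twice gives
the clique condition. Conversely, two entries `x < y` in the same half of the sorted union of
faces `S`, `T` sit at least two positions apart, so at least three entries of `S + T` lie in
`[x, y]` and one of `S`, `T` meets `[x, y]` twice; an edge `x y` would make `[x, y]` a clique,
contradicting the independence of that face.
-/

open Finset

def sortHalf (S T : Finset ℕ) (r : ℕ) : Finset ℕ :=
  ((((S.val + T.val).sort (· ≤ ·)).zipIdx.filter (fun p => p.2 % 2 = r)).map Prod.fst).toFinset

theorem sortFst_eq_sortHalf (S T : Finset ℕ) : sortFst S T = sortHalf S T 0 := rfl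

theorem sortSnd_eq_sortHalf (S T : Finset ℕ) : sortSnd S T = sortHalf S T 1 := rfl

theorem mem_sortHalf {S T : Finset ℕ} {r z : ℕ} :
    z ∈ sortHalf S T r ↔ ∃ (i : ℕ) (h : i < ((S.val + T.val).sort (· ≤ ·)).length),
      i % 2 = r ∧ ((S.val + T.val).sort (· ≤ ·))[i] = z := by
  simp only [sortHalf, List.mem_toFinset, List.mem_map, List.mem_filter, Prod.exists,
    List.mk_mem_zipIdx_iff_getElem?, decide_eq_true_eq, List.getElem?_eq_some_iff]
  constructor
  · rintro ⟨x, i, ⟨⟨hi, rfl⟩, hr⟩, rfl⟩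
    exact ⟨i, hi, hr, rfl⟩
  · rintro ⟨i, hi, hr, rfl⟩
    exact ⟨_, i, ⟨⟨hi, rfl⟩, hr⟩, rfl⟩

theorem sortHalf_subset_union (S T : Finset ℕ) (r : ℕ) : sortHalf S T r ⊆ S ∪ T := by
  intro z hz
  obtain ⟨i, hi, -, rfl⟩ := mem_sortHalf.1 hz
  have := List.getElem_mem hi
  rw [Multiset.mem_sort, Multiset.mem_add] at this
  exact Finset.mem_union.2 this

theorem length_filter_sort_add (S T : Finset ℕ) (p : ℕ → Prop) [DecidablePred p] :
    (((S.val + T.val).sort (· ≤ ·)).filter p).length = #(S.filter p) + #(T.filter p) := by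
  rw [← Multiset.coe_card, ← Multiset.filter_coe, Multiset.sort_eq, Multiset.filter_add,
    Multiset.card_add]
  rfl

theorem three_le_card_filter_mem_Icc {S T : Finset ℕ} {r x y : ℕ} (hx : x ∈ sortHalf S T r)
    (hy : y ∈ sortHalf S T r) (hxy : x < y) :
    3 ≤ #(S.filter (· ∈ Icc x y)) + #(T.filter (· ∈ Icc x y)) := by
  obtain ⟨i, hi, hir, rfl⟩ := mem_sortHalf.1 hx
  obtain ⟨j, hj, hjr, rfl⟩ := mem_sortHalf.1 hy
  set l := (S.val + T.val).sort (· ≤ ·)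
  have hl : l.Pairwise (· ≤ ·) := Multiset.pairwise_sort _ _
  have hij : i + 2 ≤ j := by
    have : i < j := by
      by_contra! hji
      exact hxy.not_ge (hl.rel_get_of_le (a := ⟨j, hj⟩) (b := ⟨i, hi⟩) hji)
    omega
  have hs : ((l.drop i).take 3).Sublist l := (List.take_sublist _ _).trans (List.drop_sublist _ _)
  have hlen : ((l.drop i).take 3).length = 3 := by
    simp only [List.length_take, List.length_drop]; omega
  have hbetween : ∀ z ∈ (l.drop i).take 3, l[i] ≤ z ∧ z ≤ l[j] := by
    intro z hz
    obtain ⟨k, hk, rfl⟩ := List.getElem_of_mem hz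
    simp only [List.getElem_take, List.getElem_drop]
    simp only [List.length_take, List.length_drop] at hk
    exact ⟨hl.rel_get_of_le (a := ⟨i, hi⟩) (b := ⟨i + k, by omega⟩) (by simp),
      hl.rel_get_of_le (a := ⟨i + k, by omega⟩) (b := ⟨j, hj⟩) (by simp; omega)⟩
  calc 3 = ((l.drop i).take 3).length := hlen.symm
    _ = (((l.drop i).take 3).filter (· ∈ Icc l[i] l[j])).length := by
      rw [List.filter_eq_self.2 (by simpa using hbetween)]
    _ ≤ (l.filter (· ∈ Icc l[i] l[j])).length := (hs.filter _).length_le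
    _ = _ := length_filter_sort_add S T _

theorem sortFst_eq_of_val_add_eq {S T : Finset ℕ} {a c b : ℕ} (hac : a < c) (hcb : c < b)
    (h : S.val + T.val = {a, c, b}) : sortFst S T = {a, b} := by
  have hsort : (S.val + T.val).sort (· ≤ ·) = [a, c, b] := by
    refine List.Perm.eq_of_pairwise' (r := (· ≤ ·)) (Multiset.pairwise_sort _ _) ?_ ?_
    · simp only [List.pairwise_cons]; grind
    · rw [← Multiset.coe_eq_coe, Multiset.sort_eq, h]; rfl
  simp [sortFst, hsort, List.zipIdx, List.filter]

section Graph

variable {G : SimpleGraph ℕ} {V : Finset ℕ}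

theorem singleton_mem_indepComplex {a : ℕ} (ha : a ∈ V) : {a} ∈ indepComplex G V := by
  simp [indepComplex, IsIndep, ha]

theorem pair_mem_indepComplex {a b : ℕ} (ha : a ∈ V) (hb : b ∈ V) (hab : ¬ G.Adj a b) :
    {a, b} ∈ indepComplex G V := by
  simp [indepComplex, IsIndep, insert_subset_iff, ha, hb, hab, G.adj_comm b a]

theorem pair_notMem_indepComplex {a b : ℕ} (hab : G.Adj a b) : {a, b} ∉ indepComplex G V :=
  fun h => h.2 a (by simp) b (by simp) hab

theorem adj_of_adj_of_lt_of_lt (hΔ : SortableWrt (indepComplex G V)) {a b c : ℕ} (ha : a ∈ V)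
    (hb : b ∈ V) (hc : c ∈ V) (hab : G.Adj a b) (hac : a < c) (hcb : c < b) :
    G.Adj a c ∧ G.Adj c b := by
  constructor
  · by_contra hnac
    have hsort := (hΔ _ (pair_mem_indepComplex ha hc hnac) _ (singleton_mem_indepComplex hb)).1
    rw [sortFst_eq_of_val_add_eq hac hcb (by
      rw [Finset.insert_val_of_notMem (by simpa using hac.ne)]; simp)] at hsort
    exact pair_notMem_indepComplex hab hsort
  · by_contra hncb
    have hsort := (hΔ _ (singleton_mem_indepComplex ha) _ (pair_mem_indepComplex hc hb hncb)).1
    rw [sortFst_eq_of_val_add_eq hac hcb (by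
      rw [Finset.insert_val_of_notMem (by simpa using hcb.ne)]; simp [Multiset.cons_swap])] at hsort
    exact pair_notMem_indepComplex hab hsort

theorem properIntervalLabeling_of_sortableWrt (hΔ : SortableWrt (indepComplex G V)) :
    ProperIntervalLabeling G V id := by
  intro a ha b hb hab hlt
  have hleft : ∀ d ∈ V, a < d → d ≤ b → G.Adj a d := fun d hd had hdb =>
    (eq_or_lt_of_le hdb).elim (· ▸ hab) fun hdb =>
      (adj_of_adj_of_lt_of_lt hΔ ha hb hd hab had hdb).1
  suffices h : ∀ c ∈ V, ∀ d ∈ V, a ≤ c → c < d → d ≤ b → G.Adj c d by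
    intro c hc d hd hac hcb had hdb hcd
    rcases lt_or_gt_of_ne hcd with hcd | hdc
    exacts [h c hc d hd hac hcd hdb, (h d hd c hc had hdc hcb).symm]
  intro c hc d hd hac hcd hdb
  have had := hleft d hd (hac.trans_lt hcd) hdb
  rcases eq_or_lt_of_le hac with rfl | hac
  exacts [had, (adj_of_adj_of_lt_of_lt hΔ ha hd hc had hac hcd).2]

theorem card_filter_le_one_of_properIntervalLabeling (hG : ProperIntervalLabeling G V id)
    {x y : ℕ} (hx : x ∈ V) (hy : y ∈ V) (hxy : x < y) (hadj : G.Adj x y)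
    {U : Finset ℕ} (hU : U ∈ indepComplex G V) : #(U.filter (· ∈ Icc x y)) ≤ 1 := by
  refine Finset.card_le_one.2 fun p hp q hq => by_contra fun hpq => ?_
  simp only [mem_filter, mem_Icc] at hp hq
  exact hU.2 p hp.1 q hq.1 (hG x hx y hy hadj hxy p (hU.1 hp.1) q (hU.1 hq.1)
    hp.2.1 hp.2.2 hq.2.1 hq.2.2 hpq)

theorem sortHalf_mem_indepComplex (hG : ProperIntervalLabeling G V id) {S T : Finset ℕ}
    (hS : S ∈ indepComplex G V) (hT : T ∈ indepComplex G V) (r : ℕ) :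
    sortHalf S T r ∈ indepComplex G V := by
  have hV : sortHalf S T r ⊆ V := (sortHalf_subset_union S T r).trans (union_subset hS.1 hT.1)
  have hlt : ∀ x ∈ sortHalf S T r, ∀ y ∈ sortHalf S T r, x < y → ¬ G.Adj x y := by
    intro x hx y hy hxy hadj
    have := three_le_card_filter_mem_Icc hx hy hxy
    have := card_filter_le_one_of_properIntervalLabeling hG (hV hx) (hV hy) hxy hadj hS
    have := card_filter_le_one_of_properIntervalLabeling hG (hV hx) (hV hy) hxy hadj hT
    omega
  refine ⟨hV, fun x hx y hy hadj => ?_⟩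
  rcases lt_or_gt_of_ne (G.ne_of_adj hadj) with h | h
  exacts [hlt x hx y hy h hadj, hlt y hy x hx h hadj.symm]

theorem sortableWrt_indepComplex_of_properIntervalLabeling (hG : ProperIntervalLabeling G V id) :
    SortableWrt (indepComplex G V) := fun _ hS _ hT => by
  rw [sortFst_eq_sortHalf, sortSnd_eq_sortHalf]
  exact ⟨sortHalf_mem_indepComplex hG hS hT 0, sortHalf_mem_indepComplex hG hS hT 1⟩

theorem sortableWrt_indepComplex_iff :
    SortableWrt (indepComplex G V) ↔ ProperIntervalLabeling G V id :=
  ⟨properIntervalLabeling_of_sortableWrt, sortableWrt_indepComplex_of_properIntervalLabeling⟩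

end Graph

section Relabel

variable (f : ℕ ↪ ℕ) (G : SimpleGraph ℕ) (V : Finset ℕ)

theorem image_indepComplex :
    {F | ∃ H ∈ indepComplex G V, F = H.image f} = indepComplex (G.map f) (V.image f) := by
  ext F
  constructor
  · rintro ⟨H, ⟨hHV, hH⟩, rfl⟩
    refine ⟨image_subset_image hHV, ?_⟩
    simp only [IsIndep, forall_mem_image, SimpleGraph.map_adj_apply]
    exact hH
  · rintro ⟨hFV, hF⟩
    refine ⟨V.filter (f · ∈ F), ⟨filter_subset _ _, fun a ha b hb hab => ?_⟩, ?_⟩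
    · exact hF _ (mem_filter.1 ha).2 _ (mem_filter.1 hb).2 (SimpleGraph.map_adj_apply.2 hab)
    · rw [← filter_image (p := (· ∈ F)), filter_mem_eq_inter, inter_eq_right.2 hFV]

theorem properIntervalLabeling_map_iff :
    ProperIntervalLabeling (G.map f) (V.image f) id ↔ ProperIntervalLabeling G V f := by
  simp only [ProperIntervalLabeling, forall_mem_image, SimpleGraph.map_adj_apply, id,
    f.injective.ne_iff]

end Relabel

theorem stmt_12_general (G : SimpleGraph ℕ) (V : Finset ℕ) :
    Sortable (indepComplex G V) ↔
      ∃ f : ℕ → ℕ, Function.Injective f ∧ ProperIntervalLabeling G V f :=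
  exists_congr fun f => and_congr_right fun hf => by
    let e : ℕ ↪ ℕ := ⟨f, hf⟩
    rw [show f = e from rfl, image_indepComplex, sortableWrt_indepComplex_iff,
      properIntervalLabeling_map_iff]

theorem stmt_12 (G : SimpleGraph ℕ) (V : Finset ℕ)
    (hedge : ∀ a b, G.Adj a b → a ∈ V ∧ b ∈ V) :
    Sortable (indepComplex G V) ↔
      ∃ f : ℕ → ℕ, Function.Injective f ∧ ProperIntervalLabeling G V f :=
  stmt_12_general G V
end

section
/- (Hard direction of the characterization) Let G be a graph on {1,...,n} such that for all i < j with {i,j} ∈ E(G), the induced subgraph of G on {i,...,j} is a clique. Then for any two independent sets F₁, F₂ of G, both components of sort(F₁, F₂) are again independent sets of G. -/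
/-!
If `a < b` are adjacent, the hypothesis makes `[a, b]` a clique, so each independent `Fᵢ` has
at most one element in `[a, b]` and the multiset `F₁ + F₂` at most two. Two distinct entries of
the same component of `sort(F₁, F₂)` sit at positions of equal parity, hence at least two apart,
in the sorted list of `F₁ + F₂`; if they were `a < b`, the three or more entries from the
position of `a` to that of `b` would all lie in `[a, b]`.
-/

theorem List.SortedLE.sub_add_one_le_countP {α : Type*} [LinearOrder α] {l : List α}
    (hl : l.SortedLE) {i j : ℕ} (hij : i ≤ j) (hj : j < l.length) :
    j + 1 - i ≤ l.countP (fun x => l[i] ≤ x ∧ x ≤ l[j]) := by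
  set window := (l.drop i).take (j + 1 - i)
  have hlen : window.length = j + 1 - i := by
    simp only [window, List.length_take, List.length_drop]
    omega
  have hwindow : ∀ x ∈ window, l[i] ≤ x ∧ x ≤ l[j] := by
    intro x hx
    obtain ⟨k, hk, rfl⟩ := List.mem_iff_getElem.mp hx
    rw [hlen] at hk
    simp only [window, List.getElem_take, List.getElem_drop]
    exact ⟨hl.getElem_le_getElem_of_le (by omega), hl.getElem_le_getElem_of_le (by omega)⟩
  have hsub : window.Sublist l := (List.take_sublist _ _).trans (List.drop_sublist _ _)
  have hcount := hsub.countP_le (p := fun x => l[i] ≤ x ∧ x ≤ l[j])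
  rwa [List.countP_eq_length.mpr (by simpa using hwindow), hlen] at hcount

theorem List.mem_map_fst_filter_zipIdx {α : Type*} {l : List α} {q : ℕ → Bool} {a : α} :
    a ∈ (l.zipIdx.filter (fun p => q p.2)).map Prod.fst ↔
      ∃ i, ∃ hi : i < l.length, q i ∧ l[i] = a := by
  simp only [List.mem_map, List.mem_filter, Prod.exists, List.mk_mem_zipIdx_iff_getElem?,
    List.getElem?_eq_some_iff]
  constructor
  · rintro ⟨x, i, ⟨⟨hi, rfl⟩, hq⟩, rfl⟩
    exact ⟨i, hi, hq, rfl⟩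
  · rintro ⟨i, hi, hq, rfl⟩
    exact ⟨_, i, ⟨⟨hi, rfl⟩, hq⟩, rfl⟩

section IsIndep

variable {G : SimpleGraph ℕ}

theorem IsIndep.countP_le_one {F : Finset ℕ} (hF : IsIndep G F) {p : ℕ → Prop}
    [DecidablePred p] (hp : ∀ x y, p x → p y → x ≠ y → G.Adj x y) :
    F.val.countP p ≤ 1 := by
  rw [Multiset.countP_eq_card_filter, ← Finset.filter_val, Finset.card_val, Finset.card_le_one]
  intro x hx y hy
  rw [Finset.mem_filter] at hx hy
  by_contra hne
  exact hF x hx.1 y hy.1 (hp x y hx.2 hy.2 hne)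

theorem not_adj_getElem_of_add_two_le
    (h : ∀ i j, i < j → G.Adj i j →
        ∀ k l, i ≤ k → k ≤ j → i ≤ l → l ≤ j → k ≠ l → G.Adj k l)
    {F₁ F₂ : Finset ℕ} (hF₁ : IsIndep G F₁) (hF₂ : IsIndep G F₂) {L : List ℕ}
    (hLF : (L : Multiset ℕ) = F₁.val + F₂.val) (hL : L.SortedLE)
    {i j : ℕ} (hij : i + 2 ≤ j) (hj : j < L.length) :
    ¬ G.Adj L[i] L[j] := by
  intro hadj
  have hlt : L[i] < L[j] := (hL.getElem_le_getElem_of_le (by omega)).lt_of_ne hadj.ne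
  have hclique : ∀ x y, (L[i] ≤ x ∧ x ≤ L[j]) → (L[i] ≤ y ∧ y ≤ L[j]) → x ≠ y → G.Adj x y :=
    fun x y hx hy hxy => h _ _ hlt hadj x y hx.1 hx.2 hy.1 hy.2 hxy
  have upper : (F₁.val + F₂.val).countP (fun x => L[i] ≤ x ∧ x ≤ L[j]) ≤ 2 := by
    rw [Multiset.countP_add]
    have := hF₁.countP_le_one hclique
    have := hF₂.countP_le_one hclique
    omega
  have lower := hL.sub_add_one_le_countP (i := i) (by omega) hj
  rw [← hLF, Multiset.coe_countP] at upper
  omega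

theorem isIndep_toFinset_map_fst_filter_zipIdx {L : List ℕ}
    (hL : ∀ i j, (hij : i + 2 ≤ j) → (hj : j < L.length) → ¬ G.Adj L[i] L[j]) (r : ℕ) :
    IsIndep G ((L.zipIdx.filter (fun p => p.2 % 2 = r)).map Prod.fst).toFinset := by
  intro a ha b hb hadj
  obtain ⟨i, hi, hir, rfl⟩ :=
    (List.mem_map_fst_filter_zipIdx (q := fun i => i % 2 = r)).mp (List.mem_toFinset.mp ha)
  obtain ⟨j, hj, hjr, rfl⟩ :=
    (List.mem_map_fst_filter_zipIdx (q := fun i => i % 2 = r)).mp (List.mem_toFinset.mp hb)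
  simp only [decide_eq_true_eq] at hir hjr
  rcases lt_trichotomy i j with hij | rfl | hji
  · exact hL i j (by omega) hj hadj
  · exact hadj.ne rfl
  · exact hL j i (by omega) hi hadj.symm

end IsIndep

theorem stmt_13_general (G : SimpleGraph ℕ)
    (h : ∀ i j, i < j → G.Adj i j →
        ∀ k l, i ≤ k → k ≤ j → i ≤ l → l ≤ j → k ≠ l → G.Adj k l)
    (F₁ F₂ : Finset ℕ)
    (hF₁ : IsIndep G F₁) (hF₂ : IsIndep G F₂) :
    IsIndep G (sortFst F₁ F₂) ∧ IsIndep G (sortSnd F₁ F₂) := by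
  have hsorted := fun i j (hij : i + 2 ≤ j) hj =>
    not_adj_getElem_of_add_two_le (i := i) (j := j) h hF₁ hF₂ (Multiset.sort_eq _ (· ≤ ·))
      (Multiset.pairwise_sort _ _).sortedLE hij hj
  exact ⟨isIndep_toFinset_map_fst_filter_zipIdx hsorted 0,
    isIndep_toFinset_map_fst_filter_zipIdx hsorted 1⟩

theorem stmt_13 (n : ℕ) (G : SimpleGraph ℕ)
    (hsupp : ∀ a b, G.Adj a b → a ∈ Finset.Icc 1 n ∧ b ∈ Finset.Icc 1 n)
    (h : ∀ i j, i < j → G.Adj i j →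
        ∀ k l, i ≤ k → k ≤ j → i ≤ l → l ≤ j → k ≠ l → G.Adj k l)
    (F₁ F₂ : Finset ℕ) (hF₁V : F₁ ⊆ Finset.Icc 1 n) (hF₂V : F₂ ⊆ Finset.Icc 1 n)
    (hF₁ : IsIndep G F₁) (hF₂ : IsIndep G F₂) :
    IsIndep G (sortFst F₁ F₂) ∧ IsIndep G (sortSnd F₁ F₂) :=
  stmt_13_general G h F₁ F₂ hF₁ hF₂
end

section
/- (Converse direction) Let G be a graph on {1,...,n} and suppose there exist a vertex i, neighbors j, k ∈ N_G[i], and an integer ℓ with j < ℓ < k and ℓ ∉ N_G[i]. Then Δ(G) is not sortable with respect to this labeling: there exist faces F, H of Δ(G) whose sorting produces a pair not contained in Δ(G) × Δ(G). -/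
/-! With `(a, b, c)` equal to `(j, l, i)` if `l < i` and to `(i, l, k)` if `i < l`, we have
`a < b < c`, `a c` is an edge and `b` is not adjacent to `i`. So `{a, b, c}` splits into a singleton
and an independent pair, and sorting puts the edge `a c` into the first face. -/

lemma Multiset.sort_triple {α : Type*} [LinearOrder α] {a b c : α} (hab : a ≤ b) (hbc : b ≤ c) :
    ({a, b, c} : Multiset α).sort (· ≤ ·) = [a, b, c] := by
  refine List.Perm.eq_of_pairwise' (r := (· ≤ ·)) (Multiset.pairwise_sort _ _) ?_ ?_
  · simp [hab, hbc, hab.trans hbc]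
  · exact Multiset.coe_eq_coe.mp (by rw [Multiset.sort_eq]; rfl)

lemma sortFst_eq_of_add_eq {F H : Finset ℕ} {a b c : ℕ} (hab : a ≤ b) (hbc : b ≤ c)
    (h : F.val + H.val = {a, b, c}) : sortFst F H = {a, c} := by
  rw [sortFst, h, Multiset.sort_triple hab hbc]
  simp [List.zipIdx, List.filter]

lemma not_isIndep_sortFst {G : SimpleGraph ℕ} {F H : Finset ℕ} {a b c : ℕ} (hab : a ≤ b)
    (hbc : b ≤ c) (h : F.val + H.val = {a, b, c}) (hac : G.Adj a c) :
    ¬ IsIndep G (sortFst F H) := by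
  rw [sortFst_eq_of_add_eq hab hbc h]
  exact fun hind => hind a (by simp) c (by simp) hac

lemma isIndep_singleton (G : SimpleGraph ℕ) (a : ℕ) : IsIndep G {a} := by
  simp [IsIndep]

lemma isIndep_pair {G : SimpleGraph ℕ} {a b : ℕ} (h : ¬ G.Adj a b) : IsIndep G {a, b} := by
  simp [IsIndep, h, mt G.adj_symm h]

theorem stmt_14 (G : SimpleGraph ℕ) (i j k l : ℕ)
    (hj : j = i ∨ G.Adj i j) (hk : k = i ∨ G.Adj i k)
    (hjl : j < l) (hlk : l < k)
    (hl : l ≠ i ∧ ¬ G.Adj i l) :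
    ∃ F H : Finset ℕ, IsIndep G F ∧ IsIndep G H ∧
      (¬ IsIndep G (sortFst F H) ∨ ¬ IsIndep G (sortSnd F H)) := by
  obtain ⟨hl_ne, hl_nadj⟩ := hl
  rcases hl_ne.lt_or_gt with hli | hil
  · have hji : G.Adj j i := (hj.resolve_left (by omega)).symm
    refine ⟨{j}, {l, i}, isIndep_singleton G j, isIndep_pair (fun h => hl_nadj h.symm), Or.inl ?_⟩
    refine not_isIndep_sortFst hjl.le hli.le ?_ hji
    simpa [Multiset.ndinsert_of_notMem, hli.ne] using Multiset.cons_swap l j {i}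
  · have hik : G.Adj i k := hk.resolve_left (by omega)
    refine ⟨{i, l}, {k}, isIndep_pair hl_nadj, isIndep_singleton G k, Or.inl ?_⟩
    exact not_isIndep_sortFst hil.le hlk.le (by simp [Multiset.ndinsert_of_notMem, hil.ne]) hik
end

section
/- Let G be a tree. Then the independence complex Δ(G) is sortable (with respect to some labeling of the vertices) if and only if G is a path graph. -/
/-- The independence complex of a graph on the vertex type `V`,
transported to `ℕ` via the labeling `f`. -/
def labeledIndepComplex {V : Type*} [DecidableEq V] (G : SimpleGraph V) (f : V → ℕ) :
    Set (Finset ℕ) :=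
  {F | ∃ H : Finset V, (∀ a ∈ H, ∀ b ∈ H, ¬ G.Adj a b) ∧ F = H.image f}

/-- The independence complex of `G` is sortable with respect to some
labeling of the vertices. -/
def SortableGraph {V : Type*} [DecidableEq V] (G : SimpleGraph V) : Prop :=
  ∃ f : V → ℕ, Function.Injective f ∧ SortableWrt (labeledIndepComplex G f)

/-! Label `P_n` by positions. Its faces are then the subsets of `{0, …, n-1}` with no two
consecutive elements, and sorting preserves this: in the sorted merge `L` of two such sets a value
occurs twice only if it lies in both, so neither of its neighbours occurs at all, and this rules out
`L[i] + 1 = L[j]` for `j ≥ i + 2`.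

Conversely, let `f` be a labelling for which `Δ(G)` is sortable. If an edge `uv` had a vertex `z`
with `f u < f z < f v`, then sorting `{u, z}` with `{v}`, or `{z, v}` with `{u}`, would yield the
non-face `{u, v}` unless `z` is adjacent to both `u` and `v`. In a tree this cannot happen, so every
edge joins vertices of consecutive rank under `f`, and connectedness forces every two vertices of
consecutive rank to be adjacent. -/

lemma List.mem_map_fst_filter_zipIdx_mod_two {α : Type*} {L : List α} {r : ℕ} {x : α} :
    x ∈ (L.zipIdx.filter (fun p => p.2 % 2 = r)).map Prod.fst ↔
      ∃ i, ∃ h : i < L.length, i % 2 = r ∧ L[i] = x := by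
  simp only [List.mem_map, List.mem_filter, List.mem_zipIdx_iff_getElem?, Prod.exists,
    List.getElem?_eq_some_iff, decide_eq_true_eq]
  grind

lemma List.duplicate_getElem_of_getElem_eq {α : Type*} {L : List α} {i j : ℕ} (hij : i < j)
    (hj : j < L.length) (h : L[i] = L[j]) : L.Duplicate (L[i]'(hij.trans hj)) :=
  List.duplicate_iff_exists_distinct_get.2 ⟨⟨i, hij.trans hj⟩, ⟨j, hj⟩, hij, rfl, h⟩

lemma List.SortedLE.getElem_add_one_ne_of_mod_two_eq {L : List ℕ} (hL : L.SortedLE)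
    (h₁ : ∀ x, L.Duplicate x → x + 1 ∉ L) (h₂ : ∀ x, L.Duplicate (x + 1) → x ∉ L)
    {i j : ℕ} (hi : i < L.length) (hj : j < L.length) (hij : i % 2 = j % 2) :
    L[i] + 1 ≠ L[j] := by
  intro hsucc
  obtain hji | hij := le_or_gt j i
  · have : L[j] ≤ L[i] := hL.getElem_le_getElem_of_le hji
    omega
  have h₀₁ : L[i] ≤ L[i + 1] := hL.getElem_le_getElem_of_le (by omega)
  have h₁₂ : L[i + 1] ≤ L[i + 2] := hL.getElem_le_getElem_of_le (by omega)
  have h₂ⱼ : L[i + 2] ≤ L[j] := hL.getElem_le_getElem_of_le (by omega)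
  rcases (by omega : L[i] = L[i + 1] ∨ L[i] + 1 = L[i + 1] ∧ L[i + 1] = L[i + 2])
    with h | ⟨hsucc', h⟩
  · exact h₁ _ (List.duplicate_getElem_of_getElem_eq (Nat.lt_succ_self i) _ h)
      (hsucc ▸ List.getElem_mem hj)
  · refine h₂ L[i] ?_ (List.getElem_mem hi)
    rw [hsucc']
    exact List.duplicate_getElem_of_getElem_eq (Nat.lt_succ_self _) _ h

def NoConsecutive (F : Finset ℕ) : Prop := ∀ x ∈ F, x + 1 ∉ F

lemma mem_and_mem_of_duplicate_sort {F G : Finset ℕ} {x : ℕ}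
    (h : ((F.val + G.val).sort (· ≤ ·)).Duplicate x) : x ∈ F ∧ x ∈ G := by
  rw [List.duplicate_iff_two_le_count, ← Multiset.coe_count, Multiset.sort_eq,
    Multiset.count_add, Multiset.count_eq_of_nodup F.nodup,
    Multiset.count_eq_of_nodup G.nodup] at h
  constructor <;> by_contra hx <;> simp only [Finset.mem_val, hx] at h <;> split_ifs at h <;> omega

lemma mem_sort_val_add_iff {F G : Finset ℕ} {x : ℕ} :
    x ∈ (F.val + G.val).sort (· ≤ ·) ↔ x ∈ F ∪ G := by
  rw [Multiset.mem_sort, Multiset.mem_add, Finset.mem_union, Finset.mem_val, Finset.mem_val]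

lemma getElem_sort_add_one_ne {F G : Finset ℕ} (hF : NoConsecutive F) (hG : NoConsecutive G)
    {i j : ℕ} (hi : i < ((F.val + G.val).sort (· ≤ ·)).length)
    (hj : j < ((F.val + G.val).sort (· ≤ ·)).length) (hij : i % 2 = j % 2) :
    ((F.val + G.val).sort (· ≤ ·))[i] + 1 ≠ ((F.val + G.val).sort (· ≤ ·))[j] := by
  refine (Multiset.pairwise_sort _ _).sortedLE.getElem_add_one_ne_of_mod_two_eq ?_ ?_ hi hj hij
  · intro x hx hx₁
    obtain ⟨hxF, hxG⟩ := mem_and_mem_of_duplicate_sort hx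
    rcases Finset.mem_union.1 (mem_sort_val_add_iff.1 hx₁) with h | h
    exacts [hF x hxF h, hG x hxG h]
  · intro x hx hx₀
    obtain ⟨hxF, hxG⟩ := mem_and_mem_of_duplicate_sort hx
    rcases Finset.mem_union.1 (mem_sort_val_add_iff.1 hx₀) with h | h
    exacts [hF x h hxF, hG x h hxG]

lemma mem_sortFst_iff {F G : Finset ℕ} {x : ℕ} :
    x ∈ sortFst F G ↔ ∃ i, ∃ h : i < ((F.val + G.val).sort (· ≤ ·)).length,
      i % 2 = 0 ∧ ((F.val + G.val).sort (· ≤ ·))[i] = x :=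
  List.mem_toFinset.trans List.mem_map_fst_filter_zipIdx_mod_two

lemma mem_sortSnd_iff {F G : Finset ℕ} {x : ℕ} :
    x ∈ sortSnd F G ↔ ∃ i, ∃ h : i < ((F.val + G.val).sort (· ≤ ·)).length,
      i % 2 = 1 ∧ ((F.val + G.val).sort (· ≤ ·))[i] = x :=
  List.mem_toFinset.trans List.mem_map_fst_filter_zipIdx_mod_two

lemma sortFst_subset_union (F G : Finset ℕ) : sortFst F G ⊆ F ∪ G := by
  intro x hx
  obtain ⟨i, hi, -, rfl⟩ := mem_sortFst_iff.1 hx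
  exact mem_sort_val_add_iff.1 (List.getElem_mem hi)

lemma sortSnd_subset_union (F G : Finset ℕ) : sortSnd F G ⊆ F ∪ G := by
  intro x hx
  obtain ⟨i, hi, -, rfl⟩ := mem_sortSnd_iff.1 hx
  exact mem_sort_val_add_iff.1 (List.getElem_mem hi)

lemma NoConsecutive.sortFst {F G : Finset ℕ} (hF : NoConsecutive F) (hG : NoConsecutive G) :
    NoConsecutive (sortFst F G) := by
  intro x hx hx₁
  obtain ⟨i, hi, hi₂, rfl⟩ := mem_sortFst_iff.1 hx
  obtain ⟨j, hj, hj₂, hj'⟩ := mem_sortFst_iff.1 hx₁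
  exact getElem_sort_add_one_ne hF hG hi hj (hi₂.trans hj₂.symm) hj'.symm

lemma NoConsecutive.sortSnd {F G : Finset ℕ} (hF : NoConsecutive F) (hG : NoConsecutive G) :
    NoConsecutive (sortSnd F G) := by
  intro x hx hx₁
  obtain ⟨i, hi, hi₂, rfl⟩ := mem_sortSnd_iff.1 hx
  obtain ⟨j, hj, hj₂, hj'⟩ := mem_sortSnd_iff.1 hx₁
  exact getElem_sort_add_one_ne hF hG hi hj (hi₂.trans hj₂.symm) hj'.symm

lemma sortFst_of_val_add_eq {F G : Finset ℕ} {a b c : ℕ} (hab : a ≤ b) (hbc : b ≤ c)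
    (h : F.val + G.val = ↑[a, b, c]) : sortFst F G = {a, c} := by
  rw [sortFst, h, Multiset.coe_sort, List.mergeSort_eq_self (r := (· ≤ ·)) (by simp; omega)]
  simp [List.filter]

lemma exists_equiv_fin_lt_iff {V β : Type*} [Fintype V] [LinearOrder β] {f : V → β}
    (hf : Function.Injective f) :
    ∃ e : V ≃ Fin (Fintype.card V), ∀ u v, e u < e v ↔ f u < f v :=
  letI := LinearOrder.lift' f hf
  ⟨(Fintype.orderIsoFinOfCardEq V rfl).symm.toEquiv,
    fun _ _ => (Fintype.orderIsoFinOfCardEq V rfl).symm.lt_iff_lt⟩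

open SimpleGraph

section LabeledIndepComplex

variable {V : Type*} [DecidableEq V] {G : SimpleGraph V} {f : V → ℕ}

lemma mem_labeledIndepComplex_iff_of_adj_iff
    (hadj : ∀ u v, G.Adj u v ↔ f u + 1 = f v ∨ f v + 1 = f u) {F : Finset ℕ} :
    F ∈ labeledIndepComplex G f ↔ ↑F ⊆ Set.range f ∧ NoConsecutive F := by
  constructor
  · rintro ⟨H, hH, rfl⟩
    refine ⟨by rw [Finset.coe_image]; exact Set.image_subset_range f H, ?_⟩
    rintro _ hx hx₁
    obtain ⟨a, ha, rfl⟩ := Finset.mem_image.1 hx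
    obtain ⟨b, hb, hab⟩ := Finset.mem_image.1 hx₁
    exact hH a ha b hb ((hadj a b).2 (Or.inl hab.symm))
  · rintro ⟨hrange, hF⟩
    rw [← Set.image_univ, Finset.subset_set_image_iff] at hrange
    obtain ⟨H, -, rfl⟩ := hrange
    refine ⟨H, fun a ha b hb hab => ?_, rfl⟩
    rcases (hadj a b).1 hab with h | h
    · exact hF _ (Finset.mem_image_of_mem f ha) (h ▸ Finset.mem_image_of_mem f hb)
    · exact hF _ (Finset.mem_image_of_mem f hb) (h ▸ Finset.mem_image_of_mem f ha)

lemma sortableWrt_of_adj_iff (hadj : ∀ u v, G.Adj u v ↔ f u + 1 = f v ∨ f v + 1 = f u) :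
    SortableWrt (labeledIndepComplex G f) := by
  intro F hF F' hF'
  simp only [mem_labeledIndepComplex_iff_of_adj_iff hadj] at hF hF' ⊢
  have hunion : ↑(F ∪ F') ⊆ Set.range f :=
    Finset.coe_union F F' ▸ Set.union_subset hF.1 hF'.1
  exact ⟨⟨(Finset.coe_subset.2 (sortFst_subset_union F F')).trans hunion, hF.2.sortFst hF'.2⟩,
    ⟨(Finset.coe_subset.2 (sortSnd_subset_union F F')).trans hunion, hF.2.sortSnd hF'.2⟩⟩

lemma sortableGraph_of_iso_pathGraph {n : ℕ} (e : G ≃g pathGraph n) : SortableGraph G :=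
  ⟨fun v => e v, fun _ _ h => e.injective (Fin.val_injective h),
    sortableWrt_of_adj_iff fun u v => by rw [← e.map_rel_iff, pathGraph_adj]⟩

lemma singleton_mem_labeledIndepComplex (v : V) : {f v} ∈ labeledIndepComplex G f :=
  ⟨{v}, by simp, by simp⟩

lemma pair_mem_labeledIndepComplex_iff (hf : Function.Injective f) {u v : V} (huv : u ≠ v) :
    {f u, f v} ∈ labeledIndepComplex G f ↔ ¬ G.Adj u v := by
  constructor
  · rintro ⟨H, hH, hEq⟩
    have hmem : ∀ w, f w ∈ ({f u, f v} : Finset ℕ) → w ∈ H := fun w hw =>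
      hf.mem_finset_image.1 (hEq ▸ hw)
    exact hH u (hmem u (by simp)) v (hmem v (by simp))
  · intro h
    refine ⟨{u, v}, ?_, by simp [Finset.image_insert]⟩
    simp only [Finset.mem_insert, Finset.mem_singleton]
    rintro a (rfl | rfl) b (rfl | rfl) hab
    exacts [hab.ne rfl, h hab, h hab.symm, hab.ne rfl]

lemma SortableWrt.adj_of_lt_of_lt (hf : Function.Injective f)
    (hS : SortableWrt (labeledIndepComplex G f)) {u v z : V} (huv : G.Adj u v)
    (hu : f u < f z) (hv : f z < f v) : G.Adj u z ∧ G.Adj z v := by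
  have hnot : {f u, f v} ∉ labeledIndepComplex G f :=
    (pair_mem_labeledIndepComplex_iff hf huv.ne).not_left.2 huv
  constructor
  · by_contra h
    have hsort := (hS _ ((pair_mem_labeledIndepComplex_iff hf (ne_of_apply_ne f hu.ne)).2 h) _
      (singleton_mem_labeledIndepComplex v)).1
    rw [sortFst_of_val_add_eq hu.le hv.le (by simp [hu.ne]; rfl)] at hsort
    exact hnot hsort
  · by_contra h
    have hsort := (hS _ ((pair_mem_labeledIndepComplex_iff hf (ne_of_apply_ne f hv.ne)).2 h) _
      (singleton_mem_labeledIndepComplex u)).1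
    rw [sortFst_of_val_add_eq hu.le hv.le
      (by simp [hv.ne, add_comm]; exact Multiset.cons_swap _ _ _)] at hsort
    exact hnot hsort

lemma SortableWrt.pathGraph_adj_of_adj (hG : G.CliqueFree 3) (hf : Function.Injective f)
    (hS : SortableWrt (labeledIndepComplex G f)) {n : ℕ} {e : V ≃ Fin n}
    (he : ∀ u v, e u < e v ↔ f u < f v) {u v : V} (huv : G.Adj u v) :
    (pathGraph n).Adj (e u) (e v) := by
  wlog hlt : f u < f v generalizing u v
  · exact (this huv.symm ((hf.ne huv.ne).lt_or_gt.resolve_left hlt)).symm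
  rw [pathGraph_adj]
  left
  by_contra hne
  have hev : (e u : ℕ) < e v := (he u v).2 hlt
  set z := e.symm ⟨e u + 1, by omega⟩
  have hez : (e z : ℕ) = e u + 1 := by simp [z]
  obtain ⟨huz, hzv⟩ := hS.adj_of_lt_of_lt hf huv ((he u z).1 (by grind [Fin.lt_def]))
    ((he z v).1 (by grind [Fin.lt_def]))
  exact hG {u, z, v} (is3Clique_triple_iff.2 ⟨huz, huv, hzv⟩)

end LabeledIndepComplex

def SimpleGraph.Preconnected.isoPathGraph {V : Type*} {G : SimpleGraph V} (hG : G.Preconnected)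
    {n : ℕ} (e : V ≃ Fin n) (he : ∀ u v, G.Adj u v → (pathGraph n).Adj (e u) (e v)) :
    G ≃g pathGraph n where
  toEquiv := e
  map_rel_iff' {u v} := by
    refine ⟨fun h => ?_, he u v⟩
    wlog hlt : (e u : ℕ) + 1 = e v generalizing u v
    · exact (this h.symm ((pathGraph_adj.1 h).resolve_left hlt)).symm
    obtain ⟨w⟩ := hG u v
    -- the walk from `u` to `v` crosses the cut above `e u` along an edge, which must be `uv`
    obtain ⟨d, -, hd₁, hd₂⟩ :=
      w.exists_boundary_dart {x | (e x : ℕ) ≤ e u} (by simp) (by simp; omega)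
    simp only [Set.mem_ofPred_eq, not_le] at hd₁ hd₂
    have hd := pathGraph_adj.1 (he _ _ d.adj)
    obtain rfl : d.fst = u := e.injective (Fin.ext (by omega))
    obtain rfl : d.snd = v := e.injective (Fin.ext (by omega))
    exact d.adj

theorem stmt_15 {V : Type*} [Fintype V] [DecidableEq V]
    (G : SimpleGraph V) (htree : G.IsTree) :
    SortableGraph G ↔ Nonempty (G ≃g SimpleGraph.pathGraph (Fintype.card V)) := by
  constructor
  · rintro ⟨f, hf, hS⟩
    obtain ⟨e, he⟩ := exists_equiv_fin_lt_iff hf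
    exact ⟨htree.connected.preconnected.isoPathGraph e fun u v =>
      hS.pathGraph_adj_of_adj (htree.isAcyclic.cliqueFree le_rfl) hf he⟩
  · rintro ⟨e⟩
    exact sortableGraph_of_iso_pathGraph e
end

section
/- For every n ≥ 3 and every positive integer t, the independence complex Δ(C_n) of the n-cycle with the standard labeling 1, 2, ..., n is t-sortable: for any two independent sets A, B of C_n with |A| = |B| = t, both components of sort(A,B) are independent sets of C_n. -/
open Finset

namespace List

variable {α : Type*}

theorem le_countP_of_forall_getElem {l : List α} {p : α → Bool} {i j : ℕ} (hj : j < l.length)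
    (h : ∀ k (_ : i ≤ k) (hkj : k ≤ j), p (l[k]'(hkj.trans_lt hj))) :
    j + 1 - i ≤ l.countP p := by
  set window := (l.drop i).take (j + 1 - i)
  have hlen : window.length = j + 1 - i := by simp only [window, length_take, length_drop]; omega
  have hwindow : ∀ x ∈ window, p x := by
    intro x hx
    obtain ⟨k, hk, rfl⟩ := getElem_of_mem hx
    simp only [window, getElem_take, getElem_drop]
    exact h (i + k) (by omega) (by omega)
  calc j + 1 - i = window.countP p := hlen.symm.trans (countP_eq_length.2 hwindow).symm
    _ ≤ l.countP p := ((take_sublist _ _).trans (drop_sublist _ _)).countP_le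

theorem add_le_countP_of_forall_getElem {l : List α} {p : α → Bool} {i j : ℕ} (hij : i < j)
    (hj : j < l.length) (hpre : ∀ k (hki : k ≤ i), p (l[k]'(by omega)))
    (hsuf : ∀ k (_ : j ≤ k) (hk : k < l.length), p l[k]) :
    i + 1 + (l.length - j) ≤ l.countP p := by
  have hl : (l.drop j).length - 1 < (l.drop j).length := by simp only [length_drop]; omega
  calc i + 1 + (l.length - j)
      ≤ (l.take (i + 1)).countP p + (l.drop j).countP p := by
        gcongr
        · exact le_countP_of_forall_getElem (i := 0) (j := i) (by simp only [length_take]; omega)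
            fun k _ hk => by simpa only [getElem_take] using hpre k hk
        · have := le_countP_of_forall_getElem (i := 0) hl
            fun k _ hk => by
              simp only [length_drop] at hk
              simpa only [getElem_drop] using hsuf (j + k) (by omega) (by omega)
          simp only [length_drop] at this
          omega
    _ ≤ (l.take (i + 1)).countP p + (l.drop (i + 1)).countP p := by
        gcongr
        exact (drop_suffix_drop_left l hij).countP_le
    _ = l.countP p := by rw [← countP_append, take_append_drop]

end List

namespace List.SortedLE

variable {α : Type*} [Preorder α] [DecidableLE α] {l : List α} {i j : ℕ}

theorem le_countP_Icc (hl : l.SortedLE) (hj : j < l.length) (hij : i ≤ j) :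
    j + 1 - i ≤ l.countP (fun x => l[i] ≤ x ∧ x ≤ l[j]) :=
  le_countP_of_forall_getElem hj fun _ hik hkj => by
    simpa using ⟨hl.getElem_le_getElem_of_le hik, hl.getElem_le_getElem_of_le hkj⟩

theorem add_le_countP_Iic_or_Ici (hl : l.SortedLE) (hj : j < l.length) (hij : i < j) :
    i + 1 + (l.length - j) ≤ l.countP (fun x => x ≤ l[i] ∨ l[j] ≤ x) :=
  add_le_countP_of_forall_getElem hij hj
    (fun _ hki => by simpa using Or.inl (hl.getElem_le_getElem_of_le hki))
    fun _ hjk _ => by simpa using Or.inr (hl.getElem_le_getElem_of_le hjk)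

end List.SortedLE

theorem IsIndep.card_inter_pair_le_one {G : SimpleGraph ℕ} {A : Finset ℕ} (hA : IsIndep G A)
    {u v : ℕ} (huv : G.Adj u v) : #(A ∩ {u, v}) ≤ 1 := by
  refine card_le_one.2 fun x hx y hy => ?_
  simp only [mem_inter, mem_insert, mem_singleton] at hx hy
  rcases hx with ⟨hxA, rfl | rfl⟩ <;> rcases hy with ⟨hyA, rfl | rfl⟩
  exacts [rfl, (hA _ hxA _ hyA huv).elim, (hA _ hyA _ hxA huv).elim, rfl]

def sortedUnion (A B : Finset ℕ) : List ℕ := (A.val + B.val).sort (· ≤ ·)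

theorem sortedLE_sortedUnion (A B : Finset ℕ) : (sortedUnion A B).SortedLE :=
  (Multiset.pairwise_sort _ _).sortedLE

theorem length_sortedUnion (A B : Finset ℕ) : (sortedUnion A B).length = #A + #B := by
  rw [sortedUnion, Multiset.length_sort, Multiset.card_add, card_def, card_def]

theorem countP_sortedUnion (A B s : Finset ℕ) :
    (sortedUnion A B).countP (· ∈ s) = #(A ∩ s) + #(B ∩ s) := by
  rw [sortedUnion, ← Multiset.coe_countP, Multiset.sort_eq, Multiset.countP_add,
    ← filter_mem_eq_inter, ← filter_mem_eq_inter, card_def, card_def, filter_val, filter_val,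
    Multiset.countP_eq_card_filter, Multiset.countP_eq_card_filter]

theorem mem_sortFst {A B : Finset ℕ} {x : ℕ} :
    x ∈ sortFst A B ↔ ∃ i, i % 2 = 0 ∧ (sortedUnion A B)[i]? = some x := by
  simp [sortFst, sortedUnion, List.mem_zipIdx_iff_getElem?, and_comm]

theorem mem_sortSnd {A B : Finset ℕ} {x : ℕ} :
    x ∈ sortSnd A B ↔ ∃ i, i % 2 = 1 ∧ (sortedUnion A B)[i]? = some x := by
  simp [sortSnd, sortedUnion, List.mem_zipIdx_iff_getElem?, and_comm]

section Parity

variable {A B : Finset ℕ} {i j a : ℕ}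

theorem lt_of_getElem?_sortedUnion {b : ℕ} (hab : a < b) (hi : (sortedUnion A B)[i]? = some a)
    (hj : (sortedUnion A B)[j]? = some b) : i < j := by
  obtain ⟨hil, rfl⟩ := List.getElem?_eq_some_iff.1 hi
  obtain ⟨hjl, rfl⟩ := List.getElem?_eq_some_iff.1 hj
  by_contra! hji
  exact hab.not_ge ((sortedLE_sortedUnion A B).getElem_le_getElem_of_le hji)

theorem mod_two_ne_of_getElem?_sortedUnion_succ (hA : #(A ∩ {a, a + 1}) ≤ 1)
    (hB : #(B ∩ {a, a + 1}) ≤ 1) (hi : (sortedUnion A B)[i]? = some a)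
    (hj : (sortedUnion A B)[j]? = some (a + 1)) : i % 2 ≠ j % 2 := by
  have hij := lt_of_getElem?_sortedUnion (Nat.lt_succ_self a) hi hj
  obtain ⟨hil, hia⟩ := List.getElem?_eq_some_iff.1 hi
  obtain ⟨hjl, hja⟩ := List.getElem?_eq_some_iff.1 hj
  have hwindow := (sortedLE_sortedUnion A B).le_countP_Icc hjl hij.le
  rw [hia, hja] at hwindow
  have hcount : (sortedUnion A B).countP (fun x => a ≤ x ∧ x ≤ a + 1) ≤
      (sortedUnion A B).countP (· ∈ ({a, a + 1} : Finset ℕ)) :=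
    List.countP_mono_left fun x _ hx => by
      simp only [decide_eq_true_eq, mem_insert, mem_singleton] at hx ⊢
      omega
  rw [countP_sortedUnion] at hcount
  omega

theorem mod_two_ne_of_getElem?_sortedUnion_min_max {b : ℕ} (hab : a < b)
    (hAs : A ⊆ Icc a b) (hBs : B ⊆ Icc a b) (hcard : #A = #B)
    (hA : #(A ∩ {a, b}) ≤ 1) (hB : #(B ∩ {a, b}) ≤ 1)
    (hi : (sortedUnion A B)[i]? = some a) (hj : (sortedUnion A B)[j]? = some b) :
    i % 2 ≠ j % 2 := by
  have hij := lt_of_getElem?_sortedUnion hab hi hj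
  have hlen := length_sortedUnion A B
  obtain ⟨hil, hia⟩ := List.getElem?_eq_some_iff.1 hi
  obtain ⟨hjl, hjb⟩ := List.getElem?_eq_some_iff.1 hj
  have hends := (sortedLE_sortedUnion A B).add_le_countP_Iic_or_Ici hjl hij
  rw [hia, hjb] at hends
  have hcount : (sortedUnion A B).countP (fun x => x ≤ a ∨ b ≤ x) ≤
      (sortedUnion A B).countP (· ∈ ({a, b} : Finset ℕ)) := by
    refine List.countP_mono_left fun x hx hxab => ?_
    rw [sortedUnion, Multiset.mem_sort, Multiset.mem_add] at hx
    have hx' := mem_Icc.1 (hx.elim (@hAs x) (@hBs x))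
    simp only [decide_eq_true_eq, mem_insert, mem_singleton] at hxab ⊢
    omega
  rw [countP_sortedUnion] at hcount
  omega

end Parity

theorem not_adj_of_getElem?_sortedUnion_of_mod_two_eq {n : ℕ} {G : SimpleGraph ℕ}
    (hG : ∀ a b, G.Adj a b ↔
      ((a ∈ Icc 1 n ∧ b ∈ Icc 1 n) ∧
        (a + 1 = b ∨ b + 1 = a ∨ (a = 1 ∧ b = n) ∨ (a = n ∧ b = 1))))
    {A B : Finset ℕ} (hA : A ⊆ Icc 1 n) (hB : B ⊆ Icc 1 n) (hcard : #A = #B)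
    (hAi : IsIndep G A) (hBi : IsIndep G B) {a b i j : ℕ} (hpar : i % 2 = j % 2)
    (hi : (sortedUnion A B)[i]? = some a) (hj : (sortedUnion A B)[j]? = some b) :
    ¬ G.Adj a b := by
  intro hab
  obtain ⟨⟨haI, hbI⟩, hcases⟩ := (hG a b).1 hab
  rcases hcases with rfl | rfl | ⟨rfl, rfl⟩ | ⟨rfl, rfl⟩
  · exact mod_two_ne_of_getElem?_sortedUnion_succ (hAi.card_inter_pair_le_one hab)
      (hBi.card_inter_pair_le_one hab) hi hj hpar
  · exact mod_two_ne_of_getElem?_sortedUnion_succ (hAi.card_inter_pair_le_one hab.symm)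
      (hBi.card_inter_pair_le_one hab.symm) hj hi hpar.symm
  · exact mod_two_ne_of_getElem?_sortedUnion_min_max
      ((mem_Icc.1 hbI).1.lt_of_ne (G.ne_of_adj hab)) hA hB hcard
      (hAi.card_inter_pair_le_one hab) (hBi.card_inter_pair_le_one hab) hi hj hpar
  · exact mod_two_ne_of_getElem?_sortedUnion_min_max
      ((mem_Icc.1 haI).1.lt_of_ne (G.ne_of_adj hab.symm)) hA hB hcard
      (hAi.card_inter_pair_le_one hab.symm) (hBi.card_inter_pair_le_one hab.symm) hj hi hpar.symm

theorem stmt_18_general (n : ℕ) (G : SimpleGraph ℕ)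
    -- G is the n-cycle with the standard labeling 1, 2, ..., n
    (hG : ∀ a b, G.Adj a b ↔
      ((a ∈ Finset.Icc 1 n ∧ b ∈ Finset.Icc 1 n) ∧
        (a + 1 = b ∨ b + 1 = a ∨ (a = 1 ∧ b = n) ∨ (a = n ∧ b = 1))))
    (t : ℕ)
    (A B : Finset ℕ) (hA : ↑A ⊆ Finset.Icc 1 n) (hB : ↑B ⊆ Finset.Icc 1 n)
    (hAc : A.card = t) (hBc : B.card = t)
    (hAi : IsIndep G A) (hBi : IsIndep G B) :
    IsIndep G (sortFst A B) ∧ IsIndep G (sortSnd A B) := by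
  have hcard : #A = #B := hAc.trans hBc.symm
  constructor
  · intro a ha b hb
    obtain ⟨i, hi2, hi⟩ := mem_sortFst.1 ha
    obtain ⟨j, hj2, hj⟩ := mem_sortFst.1 hb
    exact not_adj_of_getElem?_sortedUnion_of_mod_two_eq hG hA hB hcard hAi hBi
      (hi2.trans hj2.symm) hi hj
  · intro a ha b hb
    obtain ⟨i, hi2, hi⟩ := mem_sortSnd.1 ha
    obtain ⟨j, hj2, hj⟩ := mem_sortSnd.1 hb
    exact not_adj_of_getElem?_sortedUnion_of_mod_two_eq hG hA hB hcard hAi hBi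
      (hi2.trans hj2.symm) hi hj

theorem stmt_18 (n : ℕ) (hn : 3 ≤ n) (G : SimpleGraph ℕ)
    -- G is the n-cycle with the standard labeling 1, 2, ..., n
    (hG : ∀ a b, G.Adj a b ↔
      ((a ∈ Finset.Icc 1 n ∧ b ∈ Finset.Icc 1 n) ∧
        (a + 1 = b ∨ b + 1 = a ∨ (a = 1 ∧ b = n) ∨ (a = n ∧ b = 1))))
    (t : ℕ) (ht : 0 < t)
    (A B : Finset ℕ) (hA : ↑A ⊆ Finset.Icc 1 n) (hB : ↑B ⊆ Finset.Icc 1 n)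
    (hAc : A.card = t) (hBc : B.card = t)
    (hAi : IsIndep G A) (hBi : IsIndep G B) :
    IsIndep G (sortFst A B) ∧ IsIndep G (sortSnd A B) :=
  stmt_18_general n G hG t A B hA hB hAc hBc hAi hBi
end
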